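/- Let r, n, c, d be integers with r ≥ 2 and n ≥ 2. Suppose that 2·r·c = n·(n+1)², that 2·(r−1)·d = (n−1)·n², and that c = n + d. Then n = r−1 or n = 2r−1. -/
import Mathlib

theorem stmt_2 (r n c d : ℤ) (hr : 2 ≤ r) (hn : 2 ≤ n)
    (h1 : 2 * r * c = n * (n + 1) ^ 2)
    (h2 : 2 * (r - 1) * d = (n - 1) * n ^ 2)
    (h3 : c = n + d) :
    n = r - 1 ∨ n = 2 * r - 1 := by
  have key : n * ((n - (r - 1)) * (n - (2 * r - 1))) = 0 := by
    linear_combination (r - 1) * h1 - r * h2 - 2 * r * (r - 1) * h3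
  have hn0 : n ≠ 0 := by omega
  rcases mul_eq_zero.mp key with h | h
  · exact absurd h hn0
  · rcases mul_eq_zero.mp h with h | h
    · left; linarith
    · right; linarith
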